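/- arXiv:1701.09070 — 3 statements merged into one kernel-verified Lean document; each statement's English description precedes it below -/
import Mathlib

section
/- Let σ, τ₀, τ₁ be 3×3 permutation matrices and let i : ℕ → {0,1} be eventually periodic (there exist k ≥ 1 and p ≥ 1 with i_{n+p} = i_n for all n ≥ k). If the nested closed triangles Γ_{(σ,τ₀,τ₁)}(i₁,…,iₙ) converge to a single point, i.e. the intersection over all n of Γ_{(σ,τ₀,τ₁)}(i₁,…,iₙ) equals {(α, β)}, then α and β are both rational numbers. -/
open Matrix MeasureTheory Filter

noncomputable section

/-- Projection π(a,b,c) = (b/a, c/a). -/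
def projPt (v : Fin 3 → ℝ) : ℝ × ℝ := (v 1 / v 0, v 2 / v 0)

def Vmat : Matrix (Fin 3) (Fin 3) ℝ := !![1,1,1; 0,1,1; 0,0,1]

def prodSeq (C : Fin 2 → Matrix (Fin 3) (Fin 3) ℝ) (i : ℕ → Fin 2) :
    ℕ → Matrix (Fin 3) (Fin 3) ℝ
  | 0 => 1
  | n + 1 => prodSeq C i n * C (i (n + 1))

/-- The subtriangle: convex hull of the π-images of the columns of V·C_{i₁}⋯C_{iₙ}. -/
def subTri (C : Fin 2 → Matrix (Fin 3) (Fin 3) ℝ) (i : ℕ → Fin 2) (n : ℕ) :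
    Set (ℝ × ℝ) :=
  convexHull ℝ (Set.range fun j : Fin 3 => projPt fun k => (Vmat * prodSeq C i n) k j)

/-- The permutation matrix of a permutation of {0,1,2}. -/
def permMat (p : Equiv.Perm (Fin 3)) : Matrix (Fin 3) (Fin 3) ℝ :=
  Matrix.of fun i j => if p j = i then 1 else 0

def G0 : Matrix (Fin 3) (Fin 3) ℝ := !![0,0,1/2; 1,0,0; 0,1,1/2]
def G1 : Matrix (Fin 3) (Fin 3) ℝ := !![1,0,1/2; 0,1,0; 0,0,1/2]

/-- The pair of matrices G₀(σ,τ₀,τ₁) = σG₀τ₀, G₁(σ,τ₀,τ₁) = σG₁τ₁. -/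
def Gtrip (σ τ0 τ1 : Matrix (Fin 3) (Fin 3) ℝ) : Fin 2 → Matrix (Fin 3) (Fin 3) ℝ :=
  ![σ * G0 * τ0, σ * G1 * τ1]

/-!
Split the index sequence into a prefix of length `k` and repetitions of one period, so that
the triangles along `n = k + m·per` are the images of the simplex `Δ` under `V·P·Mᵐ`, where
`P` and `M` are rational, invertible and column-stochastic. All points of `⋂ₘ Mᵐ Δ` are sent to
the limit point, and `V·P` is injective on `Δ`, so this intersection is a single point `w`,
which is then the unique fixed point of `M` in `Δ`. Moving from `w` towards any other fixed point
of `M` with coordinate sum `1` and support inside that of `w` stays in `Δ` for a while, so `w`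
is the unique real solution of a rational linear system, hence rational, and so is the limit
point `V·P·w`.
-/

open Function Set

theorem exists_unique_isFixedPt_of_subsingleton_iInter_image_iterate {X : Type*}
    [TopologicalSpace X] [T2Space X] {f : X → X} (hf : Continuous f) {S : Set X}
    (hS : IsCompact S) (hne : S.Nonempty) (hmaps : MapsTo f S S)
    (hsub : (⋂ n, f^[n] '' S).Subsingleton) :
    ∃ w ∈ ⋂ n, f^[n] '' S, IsFixedPt f w ∧ ∀ u ∈ S, IsFixedPt f u → u = w := by
  set K : ℕ → Set X := fun n => f^[n] '' S
  have hK : ∀ n, IsCompact (K n) := fun n => hS.image (hf.iterate n)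
  have hKsucc : ∀ n, K (n + 1) ⊆ K n := fun n => by
    simp only [K, iterate_succ, image_comp]
    exact image_mono (mapsTo_iff_image_subset.mp hmaps)
  obtain ⟨w, hw⟩ := IsCompact.nonempty_iInter_of_sequence_nonempty_isCompact_isClosed K hKsucc
    (fun n => hne.image _) (hK 0) fun n => (hK n).isClosed
  have hfw : f w ∈ ⋂ n, K n := mem_iInter.mpr fun n => by
    obtain ⟨u, hu, rfl⟩ := mem_iInter.mp hw n
    exact ⟨f u, hmaps hu, by rw [← iterate_succ_apply, iterate_succ_apply']⟩
  have hfixed_mem : ∀ u ∈ S, IsFixedPt f u → u ∈ ⋂ n, K n := fun u hu hfix =>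
    mem_iInter.mpr fun n => ⟨u, hu, (hfix.iterate n).eq⟩
  exact ⟨w, hw, hsub hfw hw, fun u hu hfix => hsub (hfixed_mem u hu hfix) hw⟩

theorem exists_pos_add_smul_sub_mem_stdSimplex {ι : Type*} [Fintype ι] {w u : ι → ℝ}
    (hw : w ∈ stdSimplex ℝ ι) (hu : ∑ j, u j = 1) (hsupp : ∀ j, w j = 0 → u j = 0) :
    ∃ t : ℝ, 0 < t ∧ w + t • (u - w) ∈ stdSimplex ℝ ι := by
  have hpos : ∀ j, ∀ᶠ t in nhdsWithin (0 : ℝ) (Ioi 0), 0 ≤ w j + t * (u j - w j) := by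
    intro j
    rcases (hw.1 j).eq_or_lt with hj | hj
    · exact Filter.Eventually.of_forall fun t => by simp [← hj, hsupp j hj.symm]
    · have hcont : Continuous fun t : ℝ => w j + t * (u j - w j) := by fun_prop
      exact nhdsWithin_le_nhds <| (hcont.tendsto' 0 (w j) (by simp)).eventually
        (eventually_ge_nhds hj)
  obtain ⟨t, ht, htpos⟩ := ((Filter.eventually_all.mpr hpos).and self_mem_nhdsWithin).exists
  refine ⟨t, htpos, fun j => by simpa using ht j, ?_⟩
  simp only [Pi.add_apply, Pi.smul_apply, Pi.sub_apply, smul_eq_mul, Finset.sum_add_distrib,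
    ← Finset.mul_sum, Finset.sum_sub_distrib, hu, hw.2]
  ring

theorem exists_comp_eq_of_unique_solution {K L m n : Type*} [Field K] [Field L] [LinearOrder L]
    [IsStrictOrderedRing L] [Fintype m] [Fintype n] [DecidableEq n] (f : K →+* L)
    (B : Matrix m n K) {w : n → L} {c : m → K} (hc : B.map f *ᵥ w = f ∘ c)
    (huniq : ∀ u, B.map f *ᵥ u = B.map f *ᵥ w → u = w) :
    ∃ q : n → K, f ∘ q = w := by
  have hBinj : LinearMap.ker (B.map f).mulVecLin = ⊥ :=
    LinearMap.ker_eq_bot'.mpr fun v hv => by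
      simpa using huniq (w + v) (by rw [mulVec_add, show B.map f *ᵥ v = 0 from hv, add_zero])
  -- the Gram matrix `Bᵀ B` is invertible over `L`, hence over `K`
  set G := Bᵀ * B
  have hG : G.map f = (B.map f)ᵀ * B.map f := by
    rw [Matrix.map_mul, Matrix.transpose_map]
  have hGinj : Injective (G.map f *ᵥ ·) := by
    rw [hG]
    exact LinearMap.ker_eq_bot.mp ((ker_mulVecLin_transpose_mul_self _).trans hBinj)
  have hGunit : IsUnit G.det := by
    have := mulVec_injective_iff_isUnit.mp hGinj
    rw [Matrix.isUnit_iff_isUnit_det, ← RingHom.mapMatrix_apply, ← RingHom.map_det,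
      isUnit_iff_ne_zero, map_ne_zero] at this
    exact this.isUnit
  refine ⟨G⁻¹ *ᵥ (Bᵀ *ᵥ c), hGinj ?_⟩
  have hmap : ∀ v : n → K, G.map f *ᵥ (f ∘ v) = f ∘ (G *ᵥ v) :=
    fun v => funext fun j => (RingHom.map_mulVec f G v j).symm
  have hmapT : Bᵀ.map f *ᵥ (f ∘ c) = f ∘ (Bᵀ *ᵥ c) :=
    funext fun j => (RingHom.map_mulVec f Bᵀ c j).symm
  simp only
  rw [hmap, mulVec_mulVec, mul_nonsing_inv _ hGunit, one_mulVec, ← hmapT, ← hc, hG,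
    ← mulVec_mulVec, Matrix.transpose_map]

theorem eq_of_isFixedPt_of_support_subset {ι : Type*} [Fintype ι] {F : (ι → ℝ) →ₗ[ℝ] ι → ℝ}
    {w u : ι → ℝ} (hw : w ∈ stdSimplex ℝ ι) (hwfix : IsFixedPt F w)
    (huniq : ∀ v ∈ stdSimplex ℝ ι, IsFixedPt F v → v = w)
    (hufix : IsFixedPt F u) (hu : ∑ j, u j = 1) (hsupp : ∀ j, w j = 0 → u j = 0) : u = w := by
  obtain ⟨t, ht, hmem⟩ := exists_pos_add_smul_sub_mem_stdSimplex hw hu hsupp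
  have := huniq _ hmem (by rw [IsFixedPt, map_add, map_smul, map_sub, hwfix.eq, hufix.eq])
  rw [add_eq_left, smul_eq_zero, sub_eq_zero] at this
  exact this.resolve_left ht.ne'

open Classical in
theorem exists_comp_eq_of_unique_isFixedPt {K n : Type*} [Field K] [Fintype n] [DecidableEq n]
    (f : K →+* ℝ) (M : Matrix n n K) {w : n → ℝ} (hw : w ∈ stdSimplex ℝ n)
    (hfix : M.map f *ᵥ w = w) (huniq : ∀ u ∈ stdSimplex ℝ n, M.map f *ᵥ u = u → u = w) :
    ∃ q : n → K, f ∘ q = w := by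
  let B : Matrix (n ⊕ n ⊕ Unit) n K :=
    fromRows (M - 1) (fromRows (diagonal fun l => if w l = 0 then 1 else 0) (of fun _ _ => 1))
  have hB : ∀ u, B.map f *ᵥ u = Sum.elim (M.map f *ᵥ u - u)
      (Sum.elim (fun l => if w l = 0 then u l else 0) fun _ => ∑ j, u j) := by
    intro u
    ext (s | l | _) <;>
      simp [B, mulVec, dotProduct, sub_mul, one_apply, diagonal_apply, apply_ite f]
  refine exists_comp_eq_of_unique_solution f B (c := Sum.elim 0 (Sum.elim 0 1)) ?_ ?_
  · ext (s | l | _) <;> simp [hB, hfix, hw.2]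
  · intro u hu
    rw [hB, hB] at hu
    obtain ⟨hMu, hZ, hsum⟩ : M.map f *ᵥ u - u = M.map f *ᵥ w - w ∧
        (fun l => if w l = 0 then u l else 0) = (fun l => if w l = 0 then w l else 0) ∧
        (fun _ : Unit => ∑ j, u j) = fun _ => ∑ j, w j := by
      simpa only [Sum.elim_eq_iff] using hu
    refine eq_of_isFixedPt_of_support_subset (F := (M.map f).mulVecLin) hw hfix huniq ?_
      (by simpa [hw.2] using congrFun hsum ()) fun l hl => by simpa [hl] using congrFun hZ l
    simpa [IsFixedPt, hfix, sub_eq_zero] using hMu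

def ratMatrices : Subring (Matrix (Fin 3) (Fin 3) ℝ) := (Rat.castHom ℝ).mapMatrix.range

def invertibleRatColStochastic : Submonoid (Matrix (Fin 3) (Fin 3) ℝ) :=
  colStochastic ℝ (Fin 3) ⊓ ratMatrices.toSubmonoid ⊓ IsUnit.submonoid _

theorem mem_invertibleRatColStochastic {A : Matrix (Fin 3) (Fin 3) ℝ} :
    A ∈ invertibleRatColStochastic ↔ A ∈ colStochastic ℝ (Fin 3) ∧ A ∈ ratMatrices ∧ IsUnit A := by
  simp [invertibleRatColStochastic, Submonoid.mem_inf, IsUnit.mem_submonoid_iff, and_assoc]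

theorem permMat_eq_permMatrixHom (p : Equiv.Perm (Fin 3)) : permMat p = permMatrixHom p := by
  ext i j
  simp [permMat, Equiv.Perm.permMatrix, PEquiv.toMatrix_apply, Equiv.eq_symm_apply, eq_comm]

theorem permMat_mem_invertibleRatColStochastic (p : Equiv.Perm (Fin 3)) :
    permMat p ∈ invertibleRatColStochastic := by
  rw [permMat_eq_permMatrixHom, mem_invertibleRatColStochastic]
  exact ⟨by simp, ⟨permMatrixHom p, PEquiv.map_toMatrix (Rat.castHom ℝ) _⟩,
    (Group.isUnit p).map _⟩

theorem G0_mem_invertibleRatColStochastic : G0 ∈ invertibleRatColStochastic := by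
  refine mem_invertibleRatColStochastic.mpr ⟨?_, ⟨!![0, 0, 1/2; 1, 0, 0; 0, 1, 1/2], ?_⟩, ?_⟩
  · refine mem_colStochastic_iff_sum.mpr ⟨fun i j => ?_, fun j => ?_⟩
    · fin_cases i <;> fin_cases j <;> norm_num [G0]
    · fin_cases j <;> norm_num [G0, Fin.sum_univ_three, cons_val_two]
  · ext i j; fin_cases i <;> fin_cases j <;> simp [G0]
  · simp [isUnit_iff_isUnit_det, G0, det_fin_three]

theorem G1_mem_invertibleRatColStochastic : G1 ∈ invertibleRatColStochastic := by
  refine mem_invertibleRatColStochastic.mpr ⟨?_, ⟨!![1, 0, 1/2; 0, 1, 0; 0, 0, 1/2], ?_⟩, ?_⟩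
  · refine mem_colStochastic_iff_sum.mpr ⟨fun i j => ?_, fun j => ?_⟩
    · fin_cases i <;> fin_cases j <;> norm_num [G1]
    · fin_cases j <;> norm_num [G1, Fin.sum_univ_three, cons_val_two]
  · ext i j; fin_cases i <;> fin_cases j <;> simp [G1]
  · simp [isUnit_iff_isUnit_det, G1, det_fin_three]

theorem Vmat_mem_ratMatrices : Vmat ∈ ratMatrices :=
  ⟨!![1, 1, 1; 0, 1, 1; 0, 0, 1], by ext i j; fin_cases i <;> fin_cases j <;> simp [Vmat]⟩

theorem Gtrip_mem_invertibleRatColStochastic (p q r : Equiv.Perm (Fin 3)) (j : Fin 2) :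
    Gtrip (permMat p) (permMat q) (permMat r) j ∈ invertibleRatColStochastic := by
  have := permMat_mem_invertibleRatColStochastic
  fin_cases j
  · exact mul_mem (mul_mem (this p) G0_mem_invertibleRatColStochastic) (this q)
  · exact mul_mem (mul_mem (this p) G1_mem_invertibleRatColStochastic) (this r)

section prodSeq

variable (C : Fin 2 → Matrix (Fin 3) (Fin 3) ℝ) (i : ℕ → Fin 2)

theorem prodSeq_mem {S : Submonoid (Matrix (Fin 3) (Fin 3) ℝ)} (hC : ∀ j, C j ∈ S) (n : ℕ) :
    prodSeq C i n ∈ S := by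
  induction n with
  | zero => exact one_mem S
  | succ n ih => exact mul_mem ih (hC _)

theorem prodSeq_add (a b : ℕ) :
    prodSeq C i (a + b) = prodSeq C i a * prodSeq C (fun n => i (a + n)) b := by
  induction b with
  | zero => simp [prodSeq]
  | succ b ih => rw [← add_assoc, prodSeq, ih, prodSeq, mul_assoc, add_assoc]

theorem prodSeq_mul_of_periodic {per : ℕ} (hper : Periodic i per) (m : ℕ) :
    prodSeq C i (m * per) = prodSeq C i per ^ m := by
  induction m with
  | zero => simp [prodSeq]
  | succ m ih =>
    have : (fun n => i (m * per + n)) = i := funext fun n => by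
      rw [add_comm]; exact hper.nat_mul m n
    rw [add_mul, one_mul, prodSeq_add, ih, this, pow_succ]

end prodSeq

theorem mulVec_mem_stdSimplex {n : Type*} [Fintype n] [DecidableEq n]
    {A : Matrix n n ℝ} (hA : A ∈ colStochastic ℝ n) {x : n → ℝ} (hx : x ∈ stdSimplex ℝ n) :
    A *ᵥ x ∈ stdSimplex ℝ n :=
  ⟨nonneg_mulVec_of_mem_colStochastic hA hx.1, (sum_mulVec_of_mem_colStochastic hA).trans hx.2⟩

/-- `π` on the plane `a = 1`, which contains the columns of `V·A` for column-stochastic `A`. -/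
def triMap (A : Matrix (Fin 3) (Fin 3) ℝ) : (Fin 3 → ℝ) →ₗ[ℝ] ℝ × ℝ :=
  (LinearMap.proj 1).prod (LinearMap.proj 2) ∘ₗ (Vmat * A).mulVecLin

theorem triMap_apply (A : Matrix (Fin 3) (Fin 3) ℝ) (x : Fin 3 → ℝ) :
    triMap A x = (((Vmat * A) *ᵥ x) 1, ((Vmat * A) *ᵥ x) 2) := rfl

theorem triMap_mul (A B : Matrix (Fin 3) (Fin 3) ℝ) : triMap (A * B) = triMap A ∘ₗ B.mulVecLin := by
  rw [triMap, triMap, ← mul_assoc, mulVecLin_mul, LinearMap.comp_assoc]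

theorem Vmat_mulVec_zero (x : Fin 3 → ℝ) : (Vmat *ᵥ x) 0 = ∑ j, x j := by
  simp [Vmat, mulVec, dotProduct, Fin.sum_univ_three]

theorem convexHull_projPt_eq_image_triMap {A : Matrix (Fin 3) (Fin 3) ℝ}
    (hA : A ∈ colStochastic ℝ (Fin 3)) :
    convexHull ℝ (range fun j : Fin 3 => projPt fun k => (Vmat * A) k j) =
      triMap A '' stdSimplex ℝ (Fin 3) := by
  rw [← convexHull_rangle_single_eq_stdSimplex, LinearMap.image_convexHull, ← range_comp]
  congr 2
  ext j : 1
  have hcol : (Vmat * A) 0 j = 1 := by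
    rw [← sum_col_of_mem_colStochastic hA j]
    simp [mul_apply, Vmat, Fin.sum_univ_three]
  simp [projPt, triMap_apply, hcol]

theorem subTri_eq_image_triMap {C : Fin 2 → Matrix (Fin 3) (Fin 3) ℝ}
    (hC : ∀ j, C j ∈ colStochastic ℝ (Fin 3)) (i : ℕ → Fin 2) (n : ℕ) :
    subTri C i n = triMap (prodSeq C i n) '' stdSimplex ℝ (Fin 3) :=
  convexHull_projPt_eq_image_triMap (prodSeq_mem C i hC n)

theorem subTri_antitone {C : Fin 2 → Matrix (Fin 3) (Fin 3) ℝ}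
    (hC : ∀ j, C j ∈ colStochastic ℝ (Fin 3)) (i : ℕ → Fin 2) : Antitone (subTri C i) := by
  refine antitone_nat_of_succ_le fun n => ?_
  rw [subTri_eq_image_triMap hC, subTri_eq_image_triMap hC, prodSeq, triMap_mul, LinearMap.coe_comp,
    image_comp]
  exact image_mono fun _ ⟨x, hx, hxy⟩ => hxy ▸ mulVec_mem_stdSimplex (hC _) hx

theorem isUnit_Vmat : IsUnit Vmat := by
  simp [isUnit_iff_isUnit_det, Vmat, det_fin_three]

theorem triMap_injOn {A : Matrix (Fin 3) (Fin 3) ℝ} (hA : A ∈ colStochastic ℝ (Fin 3))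
    (hAunit : IsUnit A) : InjOn (triMap A) (stdSimplex ℝ (Fin 3)) := by
  intro x hx y hy hxy
  simp only [triMap_apply, Prod.mk.injEq] at hxy
  have h0 : ((Vmat * A) *ᵥ x) 0 = ((Vmat * A) *ᵥ y) 0 := by
    simp only [← mulVec_mulVec, Vmat_mulVec_zero, sum_mulVec_of_mem_colStochastic hA, hx.2, hy.2]
  refine mulVec_injective_iff_isUnit.mpr (isUnit_Vmat.mul hAunit) (funext fun s => ?_)
  fin_cases s
  exacts [h0, hxy.1, hxy.2]

theorem iterate_mulVec {R n : Type*} [Semiring R] [Fintype n] [DecidableEq n]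
    (M : Matrix n n R) (m : ℕ) : (M *ᵥ ·)^[m] = (M ^ m *ᵥ ·) := by
  induction m with
  | zero => ext; simp
  | succ m ih => ext; rw [iterate_succ', Function.comp_apply, ih, pow_succ', mulVec_mulVec]

theorem triMap_mem_iInter_subTri {C : Fin 2 → Matrix (Fin 3) (Fin 3) ℝ}
    (hC : ∀ j, C j ∈ colStochastic ℝ (Fin 3)) {i : ℕ → Fin 2} {k per : ℕ} (hper1 : 1 ≤ per)
    (hper : ∀ n, k ≤ n → i (n + per) = i n) {x : Fin 3 → ℝ}
    (hx : x ∈ ⋂ m, (prodSeq C (fun n => i (k + n)) per *ᵥ ·)^[m] '' stdSimplex ℝ (Fin 3)) :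
    triMap (prodSeq C i k) x ∈ ⋂ n, subTri C i (n + 1) := by
  have hshift : Periodic (fun n => i (k + n)) per := fun n => by
    simp only [← add_assoc, hper _ (Nat.le_add_right k n)]
  refine mem_iInter.mpr fun n => subTri_antitone hC i (?_ : n + 1 ≤ k + (n + 1) * per) ?_
  · nlinarith
  obtain ⟨u, hu, rfl⟩ := mem_iInter.mp hx (n + 1)
  rw [subTri_eq_image_triMap hC, prodSeq_add, prodSeq_mul_of_periodic C _ hshift, triMap_mul,
    iterate_mulVec]
  exact ⟨u, hu, rfl⟩

theorem exists_triMap_eq_ratCast {A : Matrix (Fin 3) (Fin 3) ℝ} (hA : A ∈ ratMatrices)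
    (q : Fin 3 → ℚ) : ∃ a b : ℚ, triMap A ((↑) ∘ q) = ((a : ℝ), (b : ℝ)) := by
  obtain ⟨Q, hQ⟩ := mul_mem Vmat_mem_ratMatrices hA
  refine ⟨(Q *ᵥ q) 1, (Q *ᵥ q) 2, ?_⟩
  rw [triMap_apply, ← hQ]
  exact Prod.ext (RingHom.map_mulVec (Rat.castHom ℝ) Q q 1).symm
    (RingHom.map_mulVec (Rat.castHom ℝ) Q q 2).symm

/-- If an eventually periodic barycentric TRIP sequence has its nested triangles
converge to a single point (α, β), then α and β are rational. -/
theorem stmt3 (p q r : Equiv.Perm (Fin 3)) (i : ℕ → Fin 2)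
    (hper : ∃ k : ℕ, 1 ≤ k ∧ ∃ per : ℕ, 1 ≤ per ∧ ∀ n : ℕ, k ≤ n → i (n + per) = i n)
    (α β : ℝ)
    (hpoint : (⋂ n : ℕ, subTri (Gtrip (permMat p) (permMat q) (permMat r)) i (n + 1))
      = {(α, β)}) :
    (∃ a : ℚ, (a : ℝ) = α) ∧ (∃ b : ℚ, (b : ℝ) = β) := by
  obtain ⟨k, -, per, hper1, hper⟩ := hper
  set C := Gtrip (permMat p) (permMat q) (permMat r)
  have hC := Gtrip_mem_invertibleRatColStochastic p q r
  have hCstoch j : C j ∈ colStochastic ℝ (Fin 3) := (mem_invertibleRatColStochastic.mp (hC j)).1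
  set P := prodSeq C i k
  set M := prodSeq C (fun n => i (k + n)) per
  obtain ⟨hPstoch, hPrat, hPunit⟩ := mem_invertibleRatColStochastic.mp (prodSeq_mem C i hC k)
  obtain ⟨hMstoch, ⟨Mq, hMq⟩, -⟩ :=
    mem_invertibleRatColStochastic.mp (prodSeq_mem C (fun n => i (k + n)) hC per)
  have hlim : ∀ x ∈ ⋂ m, (M *ᵥ ·)^[m] '' stdSimplex ℝ (Fin 3), triMap P x = (α, β) :=
    fun x hx => by simpa [hpoint] using triMap_mem_iInter_subTri hCstoch hper1 hper hx
  have hsimplex : ∀ x ∈ ⋂ m, (M *ᵥ ·)^[m] '' stdSimplex ℝ (Fin 3), x ∈ stdSimplex ℝ (Fin 3) :=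
    fun x hx => by simpa using mem_iInter.mp hx 0
  obtain ⟨w, hw, hwfix, huniq⟩ := exists_unique_isFixedPt_of_subsingleton_iInter_image_iterate
    (M.mulVecLin.continuous_of_finiteDimensional) (isCompact_stdSimplex ℝ (Fin 3))
    ⟨_, single_mem_stdSimplex ℝ 0⟩ (fun x hx => mulVec_mem_stdSimplex hMstoch hx)
    fun x hx y hy => triMap_injOn hPstoch hPunit (hsimplex x hx) (hsimplex y hy)
      ((hlim x hx).trans (hlim y hy).symm)
  obtain ⟨wq, rfl⟩ := exists_comp_eq_of_unique_isFixedPt (Rat.castHom ℝ) Mq (hsimplex w hw)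
    (by rw [← RingHom.mapMatrix_apply, hMq]; exact hwfix)
    fun u hu hfix => huniq u hu (by rwa [← RingHom.mapMatrix_apply, hMq] at hfix)
  obtain ⟨a, b, hab⟩ := exists_triMap_eq_ratCast hPrat wq
  obtain ⟨ha, hb⟩ := Prod.ext_iff.mp ((hlim _ hw).symm.trans hab)
  exact ⟨⟨a, ha.symm⟩, ⟨b, hb.symm⟩⟩
end
end

section
/- Fix 3×3 permutation matrices σ, τ₀, τ₁. For Lebesgue-almost every point (x,y) of the triangle Δ = {(x,y) ∈ ℝ² : 1 > x > y > 0} the following holds: every sequence i : ℕ → {0,1} such that (x,y) ∈ Γ_{(σ,τ₀,τ₁)}(i₁,…,iₙ) for all n ≥ 1 satisfies lim_{n→∞} (1/n)·#{k ≤ n : i_k = 1} = 1/2. That is, almost every point has a normal barycentric TRIP sequence. -/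
/-!
A word `s` of length `n` cuts out the triangle spanned by the columns of `V · G_{s₁} ⋯ G_{sₙ}`.
All TRIP matrices have column sums `1` and determinant `±1/2`, so these columns have first
coordinate `1` and the triangle has area at most `|det| = 2⁻ⁿ`. Counting `±1` spins, the fourth
moment `∑_s (∑_j ±1)⁴ ≤ 3n²2ⁿ` shows that at most `3·2ⁿ/(ε⁴n²)` words have spin sum of size
`≥ εn`; their triangles cover a set of area `O(n⁻²)`. By Borel–Cantelli almost every point lies
in only finitely many of these sets, so every TRIP sequence of such a point has spin sum `o(n)`.
-/

open Matrix MeasureTheory Filter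

noncomputable section

section Triangle

open Set

lemma Module.Basis.addHaar_finTwoProd : (Module.Basis.finTwoProd ℝ).addHaar = volume := by
  rw [Module.Basis.addHaar_eq_iff, Module.Basis.coe_parallelepiped, parallelepiped_basis_eq]
  have : {x : ℝ × ℝ | ∀ i, (Module.Basis.finTwoProd ℝ).repr x i ∈ Icc 0 1} =
      Icc 0 1 ×ˢ Icc 0 1 := by
    ext x
    simp [Fin.forall_fin_two, Prod.le_def, and_and_and_comm]
  rw [this, Measure.volume_eq_prod, Measure.prod_prod, Real.volume_Icc]
  simp

lemma convexHull_range_fin_three_subset {E : Type*} [AddCommGroup E] [Module ℝ E]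
    (P : Fin 3 → E) :
    convexHull ℝ (range P) ⊆ (P 0 + ·) '' parallelepiped ![P 1 - P 0, P 2 - P 0] := by
  refine convexHull_min ?_ ((convex_parallelepiped _).translate (P 0))
  rintro - ⟨j, rfl⟩
  have vertex (t : Fin 2 → ℝ) (ht : t ∈ Icc 0 1) :
      P 0 + ∑ k, t k • ![P 1 - P 0, P 2 - P 0] k ∈
        (P 0 + ·) '' parallelepiped ![P 1 - P 0, P 2 - P 0] :=
    ⟨_, (mem_parallelepiped_iff _ _).2 ⟨t, ht, rfl⟩, rfl⟩
  fin_cases j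
  · simpa using vertex 0 (by simp)
  · simpa [Pi.le_def, Fin.forall_fin_two] using vertex ![1, 0]
  · simpa [Pi.le_def, Fin.forall_fin_two] using vertex ![0, 1]

lemma volume_convexHull_range_fin_three_le (P : Fin 3 → ℝ × ℝ) :
    volume (convexHull ℝ (range P)) ≤
      ENNReal.ofReal |det (Matrix.of ![1, fun j => (P j).1, fun j => (P j).2])| := by
  calc volume (convexHull ℝ (range P))
      ≤ volume ((P 0 + ·) '' parallelepiped ![P 1 - P 0, P 2 - P 0]) :=
        measure_mono (convexHull_range_fin_three_subset P)
    _ = (Module.Basis.finTwoProd ℝ).addHaar (parallelepiped ![P 1 - P 0, P 2 - P 0]) := by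
        rw [image_add_left, measure_preimage_add, Module.Basis.addHaar_finTwoProd]
    _ = _ := by
        rw [Measure.addHaar_parallelepiped, Module.Basis.det_apply]
        congr 2
        simp [Matrix.det_fin_two, Matrix.det_fin_three, Module.Basis.toMatrix_apply]
        ring

end Triangle

section Products

variable {C : Fin 2 → Matrix (Fin 3) (Fin 3) ℝ}

lemma one_vecMul_prodSeq (hC : ∀ b, 1 ᵥ* C b = 1) (i : ℕ → Fin 2) (n : ℕ) :
    1 ᵥ* prodSeq C i n = 1 := by
  induction n with
  | zero => exact vecMul_one 1
  | succ n ih => rw [prodSeq, ← vecMul_vecMul, ih, hC]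

lemma abs_det_prodSeq_le {c : ℝ} (hC : ∀ b, |det (C b)| ≤ c) (i : ℕ → Fin 2) (n : ℕ) :
    |det (prodSeq C i n)| ≤ c ^ n := by
  induction n with
  | zero => simp [prodSeq]
  | succ n ih =>
    rw [prodSeq, det_mul, abs_mul, pow_succ]
    exact mul_le_mul ih (hC _) (abs_nonneg _) ((abs_nonneg _).trans ih)

lemma volume_subTri_le {c : ℝ} (hC : ∀ b, 1 ᵥ* C b = 1) (hdet : ∀ b, |det (C b)| ≤ c)
    (i : ℕ → Fin 2) (n : ℕ) : volume (subTri C i n) ≤ ENNReal.ofReal (c ^ n) := by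
  set M := Vmat * prodSeq C i n
  -- row `0` of `M` holds the column sums of `prodSeq C i n`, all `1`, so `projPt` just drops it
  have hM0 (j : Fin 3) : M 0 j = 1 := by
    have := congrFun (one_vecMul_prodSeq hC i n) j
    simpa [M, Vmat, mul_apply, vecMul, dotProduct, Fin.sum_univ_three] using this
  have hM : Matrix.of ![1, fun j => (projPt fun k => M k j).1, fun j => (projPt fun k => M k j).2]
      = M := by
    ext k j
    fin_cases k <;> simp [projPt, hM0]
  have hdetV : det Vmat = 1 := by simp [Vmat, det_fin_three]
  refine (volume_convexHull_range_fin_three_le _).trans (ENNReal.ofReal_le_ofReal ?_)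
  rw [hM, det_mul, hdetV, one_mul]
  exact abs_det_prodSeq_le hdet i n

end Products

lemma one_vecMul_permMat (p : Equiv.Perm (Fin 3)) : 1 ᵥ* permMat p = 1 := by
  ext j
  simp [permMat, vecMul, dotProduct]

lemma abs_det_permMat (p : Equiv.Perm (Fin 3)) : |det (permMat p)| = 1 := by
  have : permMat p = (p.permMatrix ℝ)ᵀ := by
    ext i j
    simp [permMat, Equiv.Perm.permMatrix, PEquiv.toMatrix, eq_comm]
  rw [this, det_transpose, det_permutation]
  rcases Int.units_eq_one_or (Equiv.Perm.sign p) with h | h <;> simp [h]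

lemma one_vecMul_G0 : 1 ᵥ* G0 = 1 := by
  ext j; fin_cases j <;> norm_num [G0, vecMul, dotProduct, Fin.sum_univ_three, cons_val_two]

lemma one_vecMul_G1 : 1 ᵥ* G1 = 1 := by
  ext j; fin_cases j <;> norm_num [G1, vecMul, dotProduct, Fin.sum_univ_three, cons_val_two]

lemma det_G0 : det G0 = 1 / 2 := by norm_num [G0, det_fin_three, cons_val_two]

lemma det_G1 : det G1 = 1 / 2 := by norm_num [G1, det_fin_three, cons_val_two]

lemma one_vecMul_Gtrip_permMat (p q r : Equiv.Perm (Fin 3)) (b : Fin 2) :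
    1 ᵥ* Gtrip (permMat p) (permMat q) (permMat r) b = 1 := by
  fin_cases b <;>
    simp [Gtrip, ← vecMul_vecMul, one_vecMul_permMat, one_vecMul_G0, one_vecMul_G1]

lemma abs_det_Gtrip_permMat (p q r : Equiv.Perm (Fin 3)) (b : Fin 2) :
    |det (Gtrip (permMat p) (permMat q) (permMat r) b)| = 1 / 2 := by
  fin_cases b <;>
    simp [Gtrip, det_mul, abs_mul, abs_det_permMat, det_G0, det_G1]

section Words

open Finset

-- `subTri _ _ n` only reads positions `1, …, n` of the sequence; the padding value is arbitrary.
def wordSeq {n : ℕ} (s : Fin n → Fin 2) : ℕ → Fin 2 :=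
  fun k => if h : k - 1 < n then s ⟨k - 1, h⟩ else 0

def prefixWord (i : ℕ → Fin 2) (n : ℕ) : Fin n → Fin 2 := fun j => i (j + 1)

lemma prodSeq_congr (C : Fin 2 → Matrix (Fin 3) (Fin 3) ℝ) {i i' : ℕ → Fin 2} {n : ℕ}
    (h : ∀ k ∈ Icc 1 n, i k = i' k) : prodSeq C i n = prodSeq C i' n := by
  induction n with
  | zero => rfl
  | succ n ih =>
    rw [prodSeq, prodSeq, ih fun k hk => h k (Icc_subset_Icc_right n.le_succ hk),
      h (n + 1) (by simp)]

lemma subTri_wordSeq_prefixWord (C : Fin 2 → Matrix (Fin 3) (Fin 3) ℝ) (i : ℕ → Fin 2)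
    (n : ℕ) : subTri C (wordSeq (prefixWord i n)) n = subTri C i n := by
  rw [subTri, subTri, prodSeq_congr C]
  intro k hk
  obtain ⟨hk1, hkn⟩ := mem_Icc.1 hk
  simp only [wordSeq, prefixWord, dif_pos (show k - 1 < n by omega)]
  congr
  omega

def spin (b : Fin 2) : ℝ := if b = 1 then 1 else -1

def spinSum {n : ℕ} (s : Fin n → Fin 2) : ℝ := ∑ j, spin (s j)

lemma spinSum_cons {n : ℕ} (b : Fin 2) (t : Fin n → Fin 2) :
    spinSum (Fin.cons b t) = spin b + spinSum t := by
  simp [spinSum, Fin.sum_univ_succ]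

lemma spinSum_prefixWord (i : ℕ → Fin 2) (n : ℕ) :
    spinSum (prefixWord i n) = 2 * #{k ∈ range n | i (k + 1) = 1} - n := by
  have spin_eq (b : Fin 2) : spin b = 2 * (if b = 1 then 1 else 0) - 1 := by
    unfold spin; split_ifs <;> norm_num
  simp only [spinSum, prefixWord, spin_eq, sum_sub_distrib, ← mul_sum,
    Fin.sum_univ_eq_sum_range (fun k => if i (k + 1) = 1 then (1 : ℝ) else 0), sum_boole]
  simp

lemma sum_fun_fin_succ {α M : Type*} [Fintype α] [AddCommMonoid M] {n : ℕ}
    (F : (Fin (n + 1) → α) → M) :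
    ∑ s, F s = ∑ b : α, ∑ t : Fin n → α, F (Fin.cons b t) := by
  rw [← Fintype.sum_prod_type']
  exact (Fintype.sum_equiv (Fin.consEquiv fun _ => α) _ _ fun _ => rfl).symm

lemma sum_spinSum_sq (n : ℕ) : ∑ s : Fin n → Fin 2, spinSum s ^ 2 = n * 2 ^ n := by
  induction n with
  | zero => simp [spinSum]
  | succ n ih =>
    simp only [sum_fun_fin_succ, spinSum_cons, Fin.sum_univ_two, spin]
    simp only [add_sq, sum_add_distrib, ← mul_sum, ih]
    norm_num
    ring

lemma sum_spinSum_pow_four (n : ℕ) :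
    ∑ s : Fin n → Fin 2, spinSum s ^ 4 = (3 * n ^ 2 - 2 * n) * 2 ^ n := by
  induction n with
  | zero => simp [spinSum]
  | succ n ih =>
    have expand (e x : ℝ) :
        (e + x) ^ 4 = x ^ 4 + 4 * e * x ^ 3 + 6 * e ^ 2 * x ^ 2 + 4 * e ^ 3 * x + e ^ 4 := by
      ring
    simp only [sum_fun_fin_succ, spinSum_cons, Fin.sum_univ_two, spin, expand,
      sum_add_distrib, ← mul_sum, ih, sum_spinSum_sq]
    norm_num
    ring

end Words

section Normality

open Finset Topology

def badWords (ε : ℝ) (n : ℕ) : Finset (Fin n → Fin 2) := {s | ε * n ≤ |spinSum s|}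

lemma card_badWords_mul_le {ε : ℝ} (hε : 0 ≤ ε) (n : ℕ) :
    #(badWords ε n) * (ε * n) ^ 4 ≤ 3 * n ^ 2 * 2 ^ n := by
  calc #(badWords ε n) * (ε * n) ^ 4
      ≤ ∑ s ∈ badWords ε n, spinSum s ^ 4 := by
        rw [← nsmul_eq_mul]
        refine card_nsmul_le_sum _ _ _ fun s hs => ?_
        rw [← (show Even 4 by decide).pow_abs (spinSum s)]
        exact pow_le_pow_left₀ (by positivity) (mem_filter.1 hs).2 4
    _ ≤ ∑ s, spinSum s ^ 4 := sum_le_univ_sum_of_nonneg fun s => by positivity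
    _ = (3 * n ^ 2 - 2 * n) * 2 ^ n := sum_spinSum_pow_four n
    _ ≤ 3 * n ^ 2 * 2 ^ n := by gcongr; linarith [(n.cast_nonneg : (0 : ℝ) ≤ n)]

lemma card_badWords_mul_le_div_sq {ε : ℝ} (hε : 0 < ε) {n : ℕ} (hn : 0 < n) :
    #(badWords ε n) * (1 / 2) ^ n ≤ 3 / ε ^ 4 * (1 / n ^ 2) := by
  have hn' : (0 : ℝ) < n := by exact_mod_cast hn
  have h2 : (2 : ℝ) ^ n * (1 / 2) ^ n = 1 := by rw [← mul_pow]; norm_num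
  calc #(badWords ε n) * (1 / 2) ^ n
      = #(badWords ε n) * (ε * n) ^ 4 * (1 / 2) ^ n / (ε ^ 4 * n ^ 4) := by field_simp
    _ ≤ 3 * n ^ 2 * 2 ^ n * (1 / 2) ^ n / (ε ^ 4 * n ^ 4) := by
        gcongr ?_ * _ / _
        exact card_badWords_mul_le hε.le n
    _ = 3 / ε ^ 4 * (1 / n ^ 2) := by
        rw [mul_assoc _ (2 ^ n), h2]
        field_simp

lemma summable_card_badWords_mul {ε : ℝ} (hε : 0 < ε) :
    Summable fun n : ℕ => (#(badWords ε n) : ℝ) * (1 / 2) ^ n := by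
  refine (summable_nat_add_iff 1).1 <| Summable.of_nonneg_of_le (fun n => by positivity)
    (fun n => card_badWords_mul_le_div_sq hε n.succ_pos) ?_
  exact ((summable_nat_add_iff 1).2 (Real.summable_one_div_nat_pow.2 one_lt_two)).mul_left _

variable {C : Fin 2 → Matrix (Fin 3) (Fin 3) ℝ}

def badSet (C : Fin 2 → Matrix (Fin 3) (Fin 3) ℝ) (ε : ℝ) (n : ℕ) : Set (ℝ × ℝ) :=
  ⋃ s ∈ badWords ε n, subTri C (wordSeq s) n

lemma volume_badSet_le (hC : ∀ b, 1 ᵥ* C b = 1) (hdet : ∀ b, |det (C b)| ≤ 1 / 2)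
    (ε : ℝ) (n : ℕ) :
    volume (badSet C ε n) ≤ ENNReal.ofReal (#(badWords ε n) * (1 / 2) ^ n) :=
  calc volume (badSet C ε n)
      ≤ ∑ s ∈ badWords ε n, volume (subTri C (wordSeq s) n) := measure_biUnion_finset_le _ _
    _ ≤ ∑ s ∈ badWords ε n, ENNReal.ofReal ((1 / 2) ^ n) :=
        sum_le_sum fun s _ => volume_subTri_le hC hdet _ n
    _ = ENNReal.ofReal (#(badWords ε n) * (1 / 2) ^ n) := by
        rw [sum_const, nsmul_eq_mul, ENNReal.ofReal_mul (by positivity), ENNReal.ofReal_natCast]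

lemma ae_eventually_notMem_badSet (hC : ∀ b, 1 ᵥ* C b = 1)
    (hdet : ∀ b, |det (C b)| ≤ 1 / 2) {ε : ℝ} (hε : 0 < ε) :
    ∀ᵐ z : ℝ × ℝ, ∀ᶠ n in atTop, z ∉ badSet C ε n :=
  ae_eventually_notMem <| ne_top_of_le_ne_top ENNReal.ofReal_ne_top <|
    (ENNReal.tsum_le_tsum (volume_badSet_le hC hdet ε)).trans_eq
      (ENNReal.ofReal_tsum_of_nonneg (fun n => by positivity) (summable_card_badWords_mul hε)).symm

lemma abs_spinSum_prefixWord_lt {ε : ℝ} {i : ℕ → Fin 2} {n : ℕ} {z : ℝ × ℝ}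
    (hz : z ∈ subTri C i n) (hgood : z ∉ badSet C ε n) :
    |spinSum (prefixWord i n)| < ε * n := by
  by_contra! h
  refine hgood (Set.mem_biUnion (mem_filter.2 ⟨mem_univ _, h⟩) ?_)
  rwa [subTri_wordSeq_prefixWord]

lemma tendsto_div_natCast_half {c : ℕ → ℝ}
    (h : ∀ m : ℕ, ∀ᶠ n in atTop, |2 * c n - n| < 1 / (m + 1) * n) :
    Tendsto (fun n => c n / n) atTop (𝓝 (1 / 2)) := by
  refine Metric.tendsto_nhds.2 fun δ hδ => ?_
  obtain ⟨m, hm⟩ := exists_nat_one_div_lt hδ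
  filter_upwards [h m, eventually_gt_atTop 0] with n hcn hn
  have hn' : (0 : ℝ) < n := by exact_mod_cast hn
  rw [Real.dist_eq, show c n / n - 1 / 2 = (2 * c n - n) / (2 * n) by field_simp, abs_div,
    abs_of_pos (show (0 : ℝ) < 2 * n by positivity), div_lt_iff₀ (by positivity)]
  nlinarith

theorem ae_tendsto_card_filter_div_half (hC : ∀ b, 1 ᵥ* C b = 1)
    (hdet : ∀ b, |det (C b)| ≤ 1 / 2) :
    ∀ᵐ z : ℝ × ℝ, ∀ i : ℕ → Fin 2, (∀ᶠ n in atTop, z ∈ subTri C i n) →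
      Tendsto (fun n : ℕ => (#{k ∈ range n | i (k + 1) = 1} : ℝ) / n) atTop (𝓝 (1 / 2)) := by
  have hgood : ∀ᵐ z : ℝ × ℝ, ∀ m : ℕ, ∀ᶠ n in atTop, z ∉ badSet C (1 / (m + 1)) n :=
    ae_all_iff.2 fun m => ae_eventually_notMem_badSet hC hdet (by positivity)
  filter_upwards [hgood] with z hz i hi
  refine tendsto_div_natCast_half fun m => ?_
  filter_upwards [hi, hz m] with n hin hout
  rw [← spinSum_prefixWord]
  exact abs_spinSum_prefixWord_lt hin hout

end Normality

/-- For Lebesgue-almost every point of the triangle Δ = {1 > x > y > 0}, every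
barycentric (σ,τ₀,τ₁) TRIP sequence of the point is normal: the frequency of ones
tends to 1/2. -/
theorem stmt11 (p q r : Equiv.Perm (Fin 3)) :
    ∀ᵐ z : ℝ × ℝ ∂volume,
      (z.2 < z.1 ∧ z.1 < 1 ∧ 0 < z.2) →
      ∀ i : ℕ → Fin 2,
        (∀ n : ℕ, 1 ≤ n → z ∈ subTri (Gtrip (permMat p) (permMat q) (permMat r)) i n) →
        Tendsto
          (fun n : ℕ =>
            (((Finset.range n).filter fun k => i (k + 1) = 1).card : ℝ) / n)
          atTop (nhds (1 / 2)) := by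
  filter_upwards [ae_tendsto_card_filter_div_half (one_vecMul_Gtrip_permMat p q r)
    fun b => (abs_det_Gtrip_permMat p q r b).le] with z hz _ i hi
  exact hz i (eventually_atTop.2 ⟨1, hi⟩)
end
end

section
/- The set of points (x,y) in the open triangle Δ = {(x,y) ∈ ℝ² : 1 > x > y > 0} for which there exists a sequence i : ℕ → {0,1} with (x,y) ∈ Δ_{(e,e,e)}(i₁,…,iₙ) for every n ≥ 1 and lim_{n→∞} (1/n)·#{k ≤ n : i_k = 1} = 1/2, has two-dimensional Lebesgue measure zero. (This is the key step showing that the Minkowski question mark analog Φ(e,e,e) is singular.) -/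
open Matrix MeasureTheory Filter

noncomputable section

/-- The Farey matrices F₀(e,e,e), F₁(e,e,e). -/
def Feee : Fin 2 → Matrix (Fin 3) (Fin 3) ℝ :=
  ![!![0,0,1; 1,0,0; 0,1,1], !![1,0,1; 0,1,0; 0,0,1]]

/-!
The triangle of a word `w` has area at most `1 / (a b c)`, where `(a, b, c)` is the first row
of `V * F_w`, because `det (V * F_w) = 1`. The potential
`W (a, b, c) = max (20 c) (17 c + 6 a) / (20 a b c²)` dominates `1 / (a b c)` and satisfies
`2 W (r F₀) + W (r F₁) ≤ (69/50) W r`, so summing `2 ^ #zeros * W` over all words of length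
`n` gives at most `(69/50) ^ n * W (1, 1, 1)`. Hence the triangles of the words of length
`32 m` with at least `15 m` zeros have total area `O (q ^ m)` with `q = (69/50) ^ 32 / 2 ^ 15 < 1`.
A point whose digit sequence has frequency of ones tending to `1/2` lies in all but finitely
many of these unions, so the set is null by Borel–Cantelli.
-/


open scoped Finset

lemma Fin.card_filter_cons_apply_eq {α : Type*} [DecidableEq α] {n : ℕ} (a d : α)
    (w : Fin n → α) :
    #{k | (Fin.cons d w : Fin (n + 1) → α) k = a} = #{k | w k = a} + if d = a then 1 else 0 := by
  rw [Fin.card_filter_univ_succ']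
  simp [add_comm]

lemma Fin.sum_univ_pi_cons {M α : Type*} [AddCommMonoid M] [Fintype α] {n : ℕ}
    (f : (Fin (n + 1) → α) → M) :
    ∑ w, f w = ∑ d, ∑ w : Fin n → α, f (Fin.cons d w) := by
  rw [← Fintype.sum_prod_type']
  exact (Fintype.sum_equiv (Fin.consEquiv fun _ => α) _ _ fun _ => rfl).symm

lemma Fin.card_filter_univ_eq_card_filter_range (n : ℕ) (p : ℕ → Prop) [DecidablePred p] :
    #{k : Fin n | p k} = #{k ∈ Finset.range n | p k} := by
  rw [Finset.card_filter, Finset.card_filter,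
    Fin.sum_univ_eq_sum_range (fun k => if p k then 1 else 0)]

lemma card_filter_eq_zero_add_card_filter_eq_one {n : ℕ} (w : Fin n → Fin 2) :
    #{k | w k = 0} + #{k | w k = 1} = n := by
  have h : ∀ k, ¬w k = 0 ↔ w k = 1 := fun k => by generalize w k = d; fin_cases d <;> simp
  simpa [h] using Finset.card_filter_add_card_filter_not (s := Finset.univ) fun k => w k = 0

open Pointwise in
lemma volume_convexHull_triangle_le (p : Fin 3 → ℝ × ℝ) :
    volume (convexHull ℝ (Set.range p)) ≤
      ENNReal.ofReal |(p 1 - p 0).1 * (p 2 - p 0).2 - (p 2 - p 0).1 * (p 1 - p 0).2| := by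
  set u := p 1 - p 0
  set v := p 2 - p 0
  set b := Module.Basis.finTwoProd ℝ
  set L := Matrix.toLin b b !![u.1, v.1; u.2, v.2]
  have hL : ∀ x : ℝ × ℝ, L x = x.1 • u + x.2 • v := by
    intro x
    simp [L, b, Matrix.toLin_apply, Matrix.mulVec, dotProduct, Fin.sum_univ_two,
      Module.Basis.coe_finTwoProd_repr, Prod.ext_iff]
    constructor <;> ring
  set box : Set (ℝ × ℝ) := Set.Icc 0 1 ×ˢ Set.Icc 0 1
  have hsub : convexHull ℝ (Set.range p) ⊆ p 0 +ᵥ L '' box := by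
    refine convexHull_min ?_ ((((convex_Icc 0 1).prod (convex_Icc 0 1)).linear_image L).vadd _)
    rintro - ⟨j, rfl⟩
    fin_cases j
    · exact ⟨0, ⟨(0, 0), by simp [box], by simp [hL]⟩, by simp⟩
    · exact ⟨u, ⟨(1, 0), by simp [box], by simp [hL]⟩, by simp [u]⟩
    · exact ⟨v, ⟨(0, 1), by simp [box], by simp [hL]⟩, by simp [v]⟩
  calc volume (convexHull ℝ (Set.range p)) ≤ volume (p 0 +ᵥ L '' box) := measure_mono hsub
    _ = ENNReal.ofReal |LinearMap.det L| * volume box := by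
      rw [measure_vadd, Measure.addHaar_image_linearMap]
    _ = _ := by
      rw [Measure.volume_eq_prod, Measure.prod_prod, Real.volume_Icc, LinearMap.det_toLin,
        Matrix.det_fin_two_of]
      simp

lemma cross_projPt_columns (N : Matrix (Fin 3) (Fin 3) ℝ) (h0 : N 0 0 ≠ 0) (h1 : N 0 1 ≠ 0)
    (h2 : N 0 2 ≠ 0) :
    let p : Fin 3 → ℝ × ℝ := fun j => projPt fun k => N k j
    (p 1 - p 0).1 * (p 2 - p 0).2 - (p 2 - p 0).1 * (p 1 - p 0).2 =
      N.det / (N 0 0 * N 0 1 * N 0 2) := by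
  simp only [projPt, Prod.fst_sub, Prod.snd_sub, Matrix.det_fin_three]
  field_simp
  ring

lemma prodSeq_eq_prod_ofFn (C : Fin 2 → Matrix (Fin 3) (Fin 3) ℝ) (i : ℕ → Fin 2)
    (n : ℕ) :
    prodSeq C i n = (List.ofFn fun k : Fin n => C (i (k + 1))).prod := by
  induction n with
  | zero => rfl
  | succ n ih => rw [prodSeq, ih, List.ofFn_succ', List.prod_concat]; rfl

def fareyProd {n : ℕ} (w : Fin n → Fin 2) : Matrix (Fin 3) (Fin 3) ℝ :=
  (List.ofFn fun k => Feee (w k)).prod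

lemma fareyProd_cons {n : ℕ} (d : Fin 2) (w : Fin n → Fin 2) :
    fareyProd (Fin.cons d w : Fin (n + 1) → Fin 2) = Feee d * fareyProd w := by
  simp [fareyProd, List.ofFn_succ]

lemma det_Feee (d : Fin 2) : (Feee d).det = 1 := by
  fin_cases d <;> simp [Feee, Matrix.det_fin_three]

lemma det_fareyProd {n : ℕ} (w : Fin n → Fin 2) : (fareyProd w).det = 1 := by
  rw [fareyProd, ← Matrix.coe_detMonoidHom, map_list_prod]
  exact List.prod_eq_one (by simp [det_Feee])

lemma det_Vmat : Vmat.det = 1 := by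
  simp [Vmat, Matrix.det_fin_three]

lemma vecMul_Feee_zero (v : Fin 3 → ℝ) : v ᵥ* Feee 0 = ![v 1, v 2, v 0 + v 2] := by
  ext j; fin_cases j <;> simp [Feee, vecMul, dotProduct, Fin.sum_univ_three]

lemma vecMul_Feee_one (v : Fin 3 → ℝ) : v ᵥ* Feee 1 = ![v 0, v 1, v 0 + v 2] := by
  ext j; fin_cases j <;> simp [Feee, vecMul, dotProduct, Fin.sum_univ_three]

def fareyTri {n : ℕ} (w : Fin n → Fin 2) : Set (ℝ × ℝ) :=
  convexHull ℝ (Set.range fun j : Fin 3 => projPt fun k => (Vmat * fareyProd w) k j)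

lemma subTri_Feee_eq_fareyTri (i : ℕ → Fin 2) (n : ℕ) :
    subTri Feee i n = fareyTri fun k : Fin n => i (k + 1) := by
  rw [subTri, prodSeq_eq_prod_ofFn]
  rfl

def fareyWeight (v : Fin 3 → ℝ) : ℝ :=
  max (20 * v 2) (17 * v 2 + 6 * v 0) / (20 * v 0 * v 1 * v 2 ^ 2)

def IsFareyRow (v : Fin 3 → ℝ) : Prop :=
  0 < v 0 ∧ 0 < v 1 ∧ v 0 ≤ v 2 ∧ v 1 ≤ v 2

lemma IsFareyRow.vecMul_Feee {v : Fin 3 → ℝ} (hv : IsFareyRow v) (d : Fin 2) :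
    IsFareyRow (v ᵥ* Feee d) := by
  obtain ⟨ha, hb, hac, hbc⟩ := hv
  fin_cases d
  · simp only [Fin.zero_eta, vecMul_Feee_zero]
    refine ⟨?_, ?_, ?_, ?_⟩ <;> simp <;> linarith
  · simp only [Fin.mk_one, vecMul_Feee_one]
    refine ⟨?_, ?_, ?_, ?_⟩ <;> simp <;> linarith

lemma IsFareyRow.vecMul_fareyProd {v : Fin 3 → ℝ} (hv : IsFareyRow v) {n : ℕ}
    (w : Fin n → Fin 2) : IsFareyRow (v ᵥ* fareyProd w) := by
  induction n generalizing v with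
  | zero => simpa [fareyProd] using hv
  | succ n ih =>
    rw [← Fin.cons_self_tail w, fareyProd_cons, ← vecMul_vecMul]
    exact ih (hv.vecMul_Feee _) _

lemma isFareyRow_Vmat_zero : IsFareyRow (Vmat 0) := by
  refine ⟨?_, ?_, ?_, ?_⟩ <;> simp [Vmat]

lemma IsFareyRow.inv_le_fareyWeight {v : Fin 3 → ℝ} (hv : IsFareyRow v) :
    (v 0 * v 1 * v 2)⁻¹ ≤ fareyWeight v := by
  obtain ⟨ha, hb, -, hbc⟩ := hv
  have hc : 0 < v 2 := hb.trans_le hbc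
  calc (v 0 * v 1 * v 2)⁻¹ = 20 * v 2 / (20 * v 0 * v 1 * v 2 ^ 2) := by field_simp
    _ ≤ fareyWeight v := by unfold fareyWeight; gcongr; exact le_max_left _ _

lemma IsFareyRow.fareyWeight_pos {v : Fin 3 → ℝ} (hv : IsFareyRow v) : 0 < fareyWeight v := by
  obtain ⟨ha, hb, -, hbc⟩ := id hv
  exact (inv_pos.2 (by have := hb.trans_le hbc; positivity)).trans_le hv.inv_le_fareyWeight

lemma fareyWeight_contraction_poly {a c : ℝ} (ha : 0 < a) (hac : a ≤ c) :
    2 * ((17 * a + 23 * c) * (a * c)) + 20 * (a + c) * c ^ 2 ≤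
      69 / 50 * (max (20 * c) (17 * c + 6 * a) * (a + c) ^ 2) := by
  have hc : 0 < c := ha.trans_le hac
  rcases le_total (2 * a) c with h2 | h2
  · rw [max_eq_left (by linarith)]
    nlinarith [mul_nonneg (sub_nonneg.2 h2) hc.le, mul_nonneg (sub_nonneg.2 h2) ha.le,
      mul_nonneg (mul_nonneg (sub_nonneg.2 h2) hc.le) hc.le, sq_nonneg (c - 2 * a),
      mul_nonneg (mul_nonneg (sub_nonneg.2 h2) ha.le) hc.le]
  · rw [max_eq_right (by linarith)]
    nlinarith [mul_nonneg (mul_nonneg (sub_nonneg.2 h2) (sub_nonneg.2 hac)) ha.le,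
      mul_nonneg (mul_nonneg (sub_nonneg.2 h2) (sub_nonneg.2 hac)) hc.le,
      mul_nonneg (mul_nonneg (sub_nonneg.2 h2) (sub_nonneg.2 h2)) ha.le,
      mul_nonneg (mul_nonneg (sub_nonneg.2 h2) (sub_nonneg.2 h2)) hc.le,
      mul_nonneg (mul_nonneg (sub_nonneg.2 hac) (sub_nonneg.2 hac)) ha.le,
      mul_nonneg (mul_nonneg (sub_nonneg.2 hac) (sub_nonneg.2 hac)) hc.le]

lemma IsFareyRow.fareyWeight_contraction {v : Fin 3 → ℝ} (hv : IsFareyRow v) :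
    2 * fareyWeight (v ᵥ* Feee 0) + fareyWeight (v ᵥ* Feee 1) ≤ 69 / 50 * fareyWeight v := by
  obtain ⟨a, b, c, rfl⟩ : ∃ a b c : ℝ, v = ![a, b, c] :=
    ⟨v 0, v 1, v 2, by ext j; fin_cases j <;> rfl⟩
  obtain ⟨ha, hb, hac, hbc⟩ : 0 < a ∧ 0 < b ∧ a ≤ c ∧ b ≤ c := by
    simpa [IsFareyRow] using hv
  have hc : 0 < c := hb.trans_le hbc
  have h0 : fareyWeight (![a, b, c] ᵥ* Feee 0) ≤
      (17 * a + 23 * c) / (20 * b * c * (a + c) ^ 2) := by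
    simp only [fareyWeight, vecMul_Feee_zero, Matrix.cons_val]
    gcongr
    exact max_le (by linarith) (by linarith)
  have h1 : fareyWeight (![a, b, c] ᵥ* Feee 1) =
      20 * (a + c) / (20 * a * b * (a + c) ^ 2) := by
    simp only [fareyWeight, vecMul_Feee_one, Matrix.cons_val]
    rw [max_eq_left (by linarith)]
  calc 2 * fareyWeight (![a, b, c] ᵥ* Feee 0) + fareyWeight (![a, b, c] ᵥ* Feee 1)
      ≤ 2 * ((17 * a + 23 * c) / (20 * b * c * (a + c) ^ 2)) +
          20 * (a + c) / (20 * a * b * (a + c) ^ 2) := by rw [h1]; gcongr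
    _ = (2 * ((17 * a + 23 * c) * (a * c)) + 20 * (a + c) * c ^ 2) /
          (20 * a * b * c ^ 2 * (a + c) ^ 2) := by field_simp
    _ ≤ 69 / 50 * (max (20 * c) (17 * c + 6 * a) * (a + c) ^ 2) /
          (20 * a * b * c ^ 2 * (a + c) ^ 2) := by
      gcongr
      exact fareyWeight_contraction_poly ha hac
    _ = 69 / 50 * fareyWeight ![a, b, c] := by
      simp only [fareyWeight, Matrix.cons_val]
      field_simp

def fareyWeightSum (n : ℕ) (v : Fin 3 → ℝ) : ℝ :=
  ∑ w : Fin n → Fin 2, 2 ^ #{k | w k = 0} * fareyWeight (v ᵥ* fareyProd w)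

lemma fareyWeightSum_succ (n : ℕ) (v : Fin 3 → ℝ) :
    fareyWeightSum (n + 1) v =
      2 * fareyWeightSum n (v ᵥ* Feee 0) + fareyWeightSum n (v ᵥ* Feee 1) := by
  simp only [fareyWeightSum, Fin.sum_univ_pi_cons, Fin.sum_univ_two, Finset.mul_sum,
    Fin.card_filter_cons_apply_eq, fareyProd_cons, vecMul_vecMul]
  simp [pow_succ, mul_comm, mul_left_comm]

lemma IsFareyRow.fareyWeightSum_le {v : Fin 3 → ℝ} (hv : IsFareyRow v) (n : ℕ) :
    fareyWeightSum n v ≤ (69 / 50) ^ n * fareyWeight v := by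
  induction n generalizing v with
  | zero => simp [fareyWeightSum, fareyProd]
  | succ n ih =>
    calc fareyWeightSum (n + 1) v
        = 2 * fareyWeightSum n (v ᵥ* Feee 0) + fareyWeightSum n (v ᵥ* Feee 1) :=
          fareyWeightSum_succ n v
      _ ≤ 2 * ((69 / 50) ^ n * fareyWeight (v ᵥ* Feee 0)) +
          (69 / 50) ^ n * fareyWeight (v ᵥ* Feee 1) := by
        gcongr
        exacts [ih (hv.vecMul_Feee 0), ih (hv.vecMul_Feee 1)]
      _ = (69 / 50) ^ n * (2 * fareyWeight (v ᵥ* Feee 0) + fareyWeight (v ᵥ* Feee 1)) := by ring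
      _ ≤ (69 / 50) ^ (n + 1) * fareyWeight v := by
        rw [pow_succ, mul_assoc]
        gcongr
        exact hv.fareyWeight_contraction

lemma volume_fareyTri_le {n : ℕ} (w : Fin n → Fin 2) :
    volume (fareyTri w) ≤ ENNReal.ofReal (fareyWeight (Vmat 0 ᵥ* fareyProd w)) := by
  have hrow := isFareyRow_Vmat_zero.vecMul_fareyProd w
  rw [← mul_apply_eq_vecMul] at hrow ⊢
  obtain ⟨ha, hb, -, hbc⟩ := id hrow
  have hc := hb.trans_le hbc
  refine (volume_convexHull_triangle_le _).trans (ENNReal.ofReal_le_ofReal ?_)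
  rw [cross_projPt_columns _ ha.ne' hb.ne' hc.ne', det_mul, det_Vmat, det_fareyProd, one_mul,
    one_div, abs_of_pos (by positivity)]
  exact hrow.inv_le_fareyWeight

lemma volume_biUnion_fareyTri_le (n k : ℕ) :
    volume (⋃ w ∈ ({w | k ≤ #{j | w j = 0}} : Finset (Fin n → Fin 2)), fareyTri w) ≤
      ENNReal.ofReal ((69 / 50) ^ n * fareyWeight (Vmat 0) / 2 ^ k) := by
  set s : Finset (Fin n → Fin 2) := {w | k ≤ #{j | w j = 0}}
  have hW : ∀ w : Fin n → Fin 2, 0 ≤ fareyWeight (Vmat 0 ᵥ* fareyProd w) := fun w =>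
    (isFareyRow_Vmat_zero.vecMul_fareyProd w).fareyWeight_pos.le
  have hmarkov : ∀ w ∈ s, fareyWeight (Vmat 0 ᵥ* fareyProd w) ≤
      2 ^ #{j | w j = 0} * fareyWeight (Vmat 0 ᵥ* fareyProd w) / 2 ^ k := by
    intro w hw
    rw [le_div_iff₀ (by positivity), mul_comm]
    exact mul_le_mul_of_nonneg_right
      (pow_le_pow_right₀ one_le_two (Finset.mem_filter.1 hw).2) (hW w)
  calc volume (⋃ w ∈ s, fareyTri w) ≤ ∑ w ∈ s, volume (fareyTri w) :=
        measure_biUnion_finset_le s _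
    _ ≤ ∑ w ∈ s, ENNReal.ofReal (fareyWeight (Vmat 0 ᵥ* fareyProd w)) :=
        Finset.sum_le_sum fun w _ => volume_fareyTri_le w
    _ = ENNReal.ofReal (∑ w ∈ s, fareyWeight (Vmat 0 ᵥ* fareyProd w)) :=
        (ENNReal.ofReal_sum_of_nonneg fun w _ => hW w).symm
    _ ≤ ENNReal.ofReal ((69 / 50) ^ n * fareyWeight (Vmat 0) / 2 ^ k) := by
      refine ENNReal.ofReal_le_ofReal ?_
      calc ∑ w ∈ s, fareyWeight (Vmat 0 ᵥ* fareyProd w)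
          ≤ ∑ w ∈ s, 2 ^ #{j | w j = 0} * fareyWeight (Vmat 0 ᵥ* fareyProd w) / 2 ^ k :=
            Finset.sum_le_sum hmarkov
        _ ≤ fareyWeightSum n (Vmat 0) / 2 ^ k := by
            rw [← Finset.sum_div, fareyWeightSum]
            exact div_le_div_of_nonneg_right (Finset.sum_le_sum_of_subset_of_nonneg
              s.subset_univ fun w _ _ => mul_nonneg (by positivity) (hW w)) (by positivity)
        _ ≤ (69 / 50) ^ n * fareyWeight (Vmat 0) / 2 ^ k := by
            gcongr
            exact isFareyRow_Vmat_zero.fareyWeightSum_le n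

def fareyCover (m : ℕ) : Set (ℝ × ℝ) :=
  ⋃ w ∈ ({w | 15 * m ≤ #{j | w j = 0}} : Finset (Fin (32 * m) → Fin 2)), fareyTri w

lemma volume_fareyCover_le (m : ℕ) :
    volume (fareyCover m) ≤
      ENNReal.ofReal (fareyWeight (Vmat 0) * ((69 / 50) ^ 32 / 2 ^ 15) ^ m) := by
  rw [fareyCover]
  convert volume_biUnion_fareyTri_le (32 * m) (15 * m) using 2
  rw [pow_mul, pow_mul, div_pow]
  ring

lemma tsum_volume_fareyCover_ne_top : ∑' m, volume (fareyCover m) ≠ ⊤ := by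
  have hq : ((69 : ℝ) / 50) ^ 32 / 2 ^ 15 < 1 := by norm_num
  have hsum := (summable_geometric_of_lt_one (by positivity) hq).mul_left (fareyWeight (Vmat 0))
  refine ne_top_of_le_ne_top ?_ (ENNReal.tsum_le_tsum volume_fareyCover_le)
  rw [← ENNReal.ofReal_tsum_of_nonneg (fun m => ?_) hsum]
  · exact ENNReal.ofReal_ne_top
  · exact mul_nonneg isFareyRow_Vmat_zero.fareyWeight_pos.le (by positivity)

lemma eventually_mem_fareyCover {z : ℝ × ℝ} {i : ℕ → Fin 2}
    (hmem : ∀ n : ℕ, 1 ≤ n → z ∈ subTri Feee i n)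
    (hfreq : Tendsto (fun n : ℕ => (#{k ∈ Finset.range n | i (k + 1) = 1} : ℝ) / n)
      atTop (nhds (1 / 2))) :
    ∀ᶠ m in atTop, z ∈ fareyCover m := by
  obtain ⟨N, hN⟩ := eventually_atTop.1 (hfreq.eventually (eventually_le_nhds
    (show (1 / 2 : ℝ) < 17 / 32 by norm_num)))
  filter_upwards [eventually_ge_atTop (N + 1)] with m hm
  set w : Fin (32 * m) → Fin 2 := fun k => i (k + 1)
  have hones : #{k | w k = 1} ≤ 17 * m := by
    have h := hN (32 * m) (by omega)
    rw [div_le_iff₀ (Nat.cast_pos.2 (by omega))] at h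
    have h' : (#{k ∈ Finset.range (32 * m) | i (k + 1) = 1} : ℝ) ≤ 17 * m := by
      push_cast at h
      linarith
    rw [Fin.card_filter_univ_eq_card_filter_range (32 * m) fun k => i (k + 1) = 1]
    exact_mod_cast h'
  have hzeros := card_filter_eq_zero_add_card_filter_eq_one w
  refine Set.mem_iUnion₂.2 ⟨w, Finset.mem_filter.2 ⟨Finset.mem_univ _, by omega⟩, ?_⟩
  rw [← subTri_Feee_eq_fareyTri]
  exact hmem _ (by omega)

/-- The set of points of the open triangle Δ = {1 > x > y > 0} possessing a normal
Farey (e,e,e) TRIP sequence (frequency of ones tending to 1/2) has Lebesgue measure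
zero. -/
theorem stmt14 :
    volume {z : ℝ × ℝ | (z.2 < z.1 ∧ z.1 < 1 ∧ 0 < z.2) ∧
      ∃ i : ℕ → Fin 2,
        (∀ n : ℕ, 1 ≤ n → z ∈ subTri Feee i n) ∧
        Tendsto
          (fun n : ℕ =>
            (((Finset.range n).filter fun k => i (k + 1) = 1).card : ℝ) / n)
          atTop (nhds (1 / 2))} = 0 := by
  refine measure_mono_null (fun z hz => ?_) (measure_liminf_atTop_eq_zero
    tsum_volume_fareyCover_ne_top)
  obtain ⟨-, i, hmem, hfreq⟩ := hz
  exact mem_liminf_iff_eventually_mem.2 (eventually_mem_fareyCover hmem hfreq)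
end
end
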